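/- The geometric mean of positive definite matrices is symmetric: A # B = B # A, where A # B := A^{1/2}(A^{-1/2} B A^{-1/2})^{1/2} A^{1/2}. -/

import Mathlib

open Matrix

section

open scoped ComplexOrder

/-- The positive semidefinite square root of a positive semidefinite matrix
(removed from Mathlib; restored with its old definition). -/
noncomputable def Matrix.PosSemidef.sqrt {n 𝕜 : Type*} [Fintype n] [RCLike 𝕜] [DecidableEq n]
    {A : Matrix n n 𝕜} (hA : A.PosSemidef) : Matrix n n 𝕜 :=
  hA.1.eigenvectorUnitary.1 * diagonal ((↑) ∘ (√·) ∘ hA.1.eigenvalues) *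
  (star hA.1.eigenvectorUnitary : Matrix n n 𝕜)

end

/-!
`A # B` is the unique positive semidefinite solution `X` of the Riccati equation `X A⁻¹ X = B`:
conjugating by `A^{-1/2}` turns it into `(A^{-1/2} X A^{-1/2})² = A^{-1/2} B A^{-1/2}`, and a
positive semidefinite square root is unique. Inverting both sides shows that `X A⁻¹ X = B` is
equivalent to `X B⁻¹ X = A`, so `B # A`, which solves the second equation, also solves the first
and therefore equals `A # B`.
-/
namespace Matrix

section CommRing

variable {n R : Type*} [Fintype n] [DecidableEq n] [CommRing R]

theorem mul_inv_mul_eq_symm {A B X : Matrix n n R} (hA : IsUnit A.det) (hB : IsUnit B.det)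
    (h : X * A⁻¹ * X = B) :
    X * B⁻¹ * X = A := by
  have hX : IsUnit X.det := by
    rw [← h, det_mul, det_mul] at hB
    exact isUnit_of_mul_isUnit_right hB
  rw [← h, Matrix.mul_inv_rev, Matrix.mul_inv_rev, nonsing_inv_nonsing_inv A hA,
    Matrix.mul_assoc, Matrix.mul_assoc, Matrix.mul_assoc, mul_nonsing_inv_cancel_left _ _ hX,
    ← Matrix.mul_assoc, nonsing_inv_mul_cancel_right _ _ hX]

theorem mul_mul_mul_nonsing_inv_mul_self_mul {S : Matrix n n R} (hS : IsUnit S.det)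
    (V W : Matrix n n R) :
    S * V * S * (S * S)⁻¹ * (S * W * S) = S * (V * W) * S := by
  simp only [Matrix.mul_inv_rev, Matrix.mul_assoc, mul_nonsing_inv_cancel_left _ _ hS,
    nonsing_inv_mul_cancel_left _ _ hS]

theorem mul_nonsing_inv_mul_mul_nonsing_inv_mul {S : Matrix n n R} (hS : IsUnit S.det)
    (C : Matrix n n R) : S * (S⁻¹ * C * S⁻¹) * S = C := by
  simp only [Matrix.mul_assoc, mul_nonsing_inv_cancel_left _ _ hS, nonsing_inv_mul _ hS,
    Matrix.mul_one]

end CommRing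

variable {n 𝕜 : Type*} [Fintype n] [DecidableEq n] [RCLike 𝕜]

open scoped ComplexOrder MatrixOrder

theorem PosSemidef.sqrt_eq_cfcSqrt {A : Matrix n n 𝕜} (hA : A.PosSemidef) :
    hA.sqrt = CFC.sqrt A := by
  rw [CFC.sqrt_eq_real_sqrt A hA.nonneg, cfcₙ_eq_cfc (hf := Real.continuous_sqrt.continuousOn)
    (hf0 := Real.sqrt_zero), hA.1.cfc_eq, IsHermitian.cfc, Unitary.conjStarAlgAut_apply]
  rfl

theorem PosDef.isUnit_det_cfcSqrt {A : Matrix n n 𝕜} (hA : A.PosDef) :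
    IsUnit (CFC.sqrt A).det :=
  (isUnit_iff_isUnit_det _).1 (CFC.isUnit_sqrt_iff_isStrictlyPositive.2 hA.isStrictlyPositive)

theorem isSelfAdjoint_cfcSqrt_inv (A : Matrix n n 𝕜) : IsSelfAdjoint (CFC.sqrt A)⁻¹ := by
  rw [IsSelfAdjoint, star_eq_conjTranspose, conjTranspose_nonsing_inv, ← star_eq_conjTranspose,
    (CFC.sqrt_nonneg A).isSelfAdjoint.star_eq]

noncomputable def geomMean (A B : Matrix n n 𝕜) : Matrix n n 𝕜 :=
  CFC.sqrt A * CFC.sqrt ((CFC.sqrt A)⁻¹ * B * (CFC.sqrt A)⁻¹) * CFC.sqrt A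

theorem geomMean_nonneg (A B : Matrix n n 𝕜) : 0 ≤ geomMean A B :=
  (CFC.sqrt_nonneg A).isSelfAdjoint.conjugate_nonneg (CFC.sqrt_nonneg _)

theorem geomMean_mul_inv_mul {A B : Matrix n n 𝕜} (hA : A.PosDef) (hB : 0 ≤ B) :
    geomMean A B * A⁻¹ * geomMean A B = B := by
  have hS := hA.isUnit_det_cfcSqrt
  set C := (CFC.sqrt A)⁻¹ * B * (CFC.sqrt A)⁻¹ with hC
  have key := mul_mul_mul_nonsing_inv_mul_self_mul hS (CFC.sqrt C) (CFC.sqrt C)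
  rwa [CFC.sqrt_mul_sqrt_self A hA.posSemidef.nonneg,
    CFC.sqrt_mul_sqrt_self C ((isSelfAdjoint_cfcSqrt_inv A).conjugate_nonneg hB), hC,
    mul_nonsing_inv_mul_mul_nonsing_inv_mul hS] at key

theorem eq_geomMean_of_mul_inv_mul_eq {A B X : Matrix n n 𝕜} (hA : A.PosDef) (hX : 0 ≤ X)
    (h : X * A⁻¹ * X = B) : X = geomMean A B := by
  have hS := hA.isUnit_det_cfcSqrt
  have hY :
      CFC.sqrt ((CFC.sqrt A)⁻¹ * B * (CFC.sqrt A)⁻¹) = (CFC.sqrt A)⁻¹ * X * (CFC.sqrt A)⁻¹ := by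
    refine CFC.sqrt_unique ?_ ((isSelfAdjoint_cfcSqrt_inv A).conjugate_nonneg hX)
    have hA_inv : A⁻¹ = (CFC.sqrt A)⁻¹ * (CFC.sqrt A)⁻¹ := by
      rw [← Matrix.mul_inv_rev, CFC.sqrt_mul_sqrt_self A hA.posSemidef.nonneg]
    rw [← h, hA_inv]
    simp only [Matrix.mul_assoc]
  rw [geomMean, hY, mul_nonsing_inv_mul_mul_nonsing_inv_mul hS]

theorem geomMean_comm {A B : Matrix n n 𝕜} (hA : A.PosDef) (hB : B.PosDef) :
    geomMean A B = geomMean B A :=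
  (eq_geomMean_of_mul_inv_mul_eq hA (geomMean_nonneg B A) <|
    mul_inv_mul_eq_symm ((isUnit_iff_isUnit_det B).1 hB.isUnit)
      ((isUnit_iff_isUnit_det A).1 hA.isUnit) <|
      geomMean_mul_inv_mul hB hA.posSemidef.nonneg).symm

end Matrix

/-- The geometric mean of positive definite matrices is symmetric in its arguments:
A # B = B # A, where A # B := A^{1/2} (A^{-1/2} B A^{-1/2})^{1/2} A^{1/2}. -/
theorem matrix_geometric_mean_symm
    {d : ℕ}
    (A B : Matrix (Fin d) (Fin d) ℝ) (hA : A.PosDef) (hB : B.PosDef)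
    (hA' : ((hA.posSemidef.sqrt)⁻¹ * B * (hA.posSemidef.sqrt)⁻¹).PosSemidef)
    (hB' : ((hB.posSemidef.sqrt)⁻¹ * A * (hB.posSemidef.sqrt)⁻¹).PosSemidef) :
    hA.posSemidef.sqrt * hA'.sqrt * hA.posSemidef.sqrt =
      hB.posSemidef.sqrt * hB'.sqrt * hB.posSemidef.sqrt := by
  rw [hA'.sqrt_eq_cfcSqrt, hB'.sqrt_eq_cfcSqrt, hA.posSemidef.sqrt_eq_cfcSqrt,
    hB.posSemidef.sqrt_eq_cfcSqrt]
  exact geomMean_comm hA hB
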